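/- Let λ be an atomless Borel probability measure on [0,1]. Then for every Borel set A ⊆ [0,1], (Vλ)(A) = ∫_A ( 2q·λ([0,x]) + 2p·λ([x,1]) ) dλ(x); that is, the Radon–Nikodym density of Vλ with respect to λ is the function x ↦ 2q·λ([0,x]) + 2p·λ([x,1]). -/

import Mathlib

open MeasureTheory Set Filter Topology ENNReal

/-- The unit interval `[0,1]` as a measurable space (with the Borel σ-algebra). -/
abbrev UnitInt : Type := ↥(Set.Icc (0:ℝ) 1)

/-- The family of measures `P(x,y,·)`: `p·δ_x + q·δ_y` if `x < y`, `δ_x` if `x = y`,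
and `p·δ_y + q·δ_x` if `x > y`. -/
noncomputable def Pker (p q : ℝ) (x y : UnitInt) : Measure UnitInt :=
  if x < y then ENNReal.ofReal p • Measure.dirac x + ENNReal.ofReal q • Measure.dirac y
  else if y < x then ENNReal.ofReal p • Measure.dirac y + ENNReal.ofReal q • Measure.dirac x
  else Measure.dirac x

/-! Off the diagonal, `P(x,y,·) = p·δ_{min x y} + q·δ_{max x y}`, and for atomless `λ` the
product `λ ⊗ λ` does not charge the diagonal, so `(Vλ)(A) = p·(λ⊗λ){min ∈ A} + q·(λ⊗λ){max ∈ A}`.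
Splitting `{min ∈ A}` according to which coordinate is the smaller one and using the symmetry of
`λ ⊗ λ`, the two pieces both equal `∫_A λ([x,1]) dλ(x)` (atomlessness again identifies `λ((x,1])`
with `λ([x,1])`); likewise for `{max ∈ A}` with `λ([0,x])`. -/

namespace MeasureTheory.Measure

section Relation

variable {α : Type*} [MeasurableSpace α] {μ : Measure α} [SFinite μ] {A : Set α}

theorem prod_self_setOf_fst_mem_and (r : α → α → Prop)
    (hr : MeasurableSet {z : α × α | r z.1 z.2}) (hA : MeasurableSet A) :
    (μ.prod μ) {z | z.1 ∈ A ∧ r z.1 z.2} = ∫⁻ x in A, μ {y | r x y} ∂μ := by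
  have hs : MeasurableSet {z : α × α | z.1 ∈ A ∧ r z.1 z.2} := (measurable_fst hA).inter hr
  rw [prod_apply hs, ← lintegral_indicator hA]
  refine lintegral_congr fun x => ?_
  by_cases hx : x ∈ A <;> simp [hx, preimage]

theorem prod_self_setOf_snd_mem_and (r : α → α → Prop)
    (hr : MeasurableSet {z : α × α | r z.1 z.2}) (hA : MeasurableSet A) :
    (μ.prod μ) {z | z.2 ∈ A ∧ r z.2 z.1} = ∫⁻ x in A, μ {y | r x y} ∂μ := by
  have hs : MeasurableSet {z : α × α | z.1 ∈ A ∧ r z.1 z.2} := (measurable_fst hA).inter hr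
  rw [← prod_self_setOf_fst_mem_and r hr hA]
  exact measurePreserving_swap.measure_preimage hs.nullMeasurableSet

end Relation

section LinearOrder

variable {α : Type*} [MeasurableSpace α] [TopologicalSpace α] [LinearOrder α]
  [OrderClosedTopology α] [SecondCountableTopology α] [OpensMeasurableSpace α]
  {μ : Measure α} [SFinite μ] [NullSingletonClass μ] {A : Set α}

theorem prod_self_setOf_min_mem (hA : MeasurableSet A) :
    (μ.prod μ) {z | min z.1 z.2 ∈ A} = 2 * ∫⁻ x in A, μ (Ici x) ∂μ := by
  have hsplit : {z : α × α | min z.1 z.2 ∈ A} =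
      {z | z.1 ∈ A ∧ z.1 ≤ z.2} ∪ {z | z.2 ∈ A ∧ z.2 < z.1} := by
    ext ⟨x, y⟩
    rcases le_or_gt x y with h | h
    · simp [h, not_lt.mpr h]
    · simp [h, h.le, not_le.mpr h]
  have hs : MeasurableSet {z : α × α | z.2 ∈ A ∧ z.2 < z.1} :=
    (measurable_snd hA).inter (measurableSet_lt measurable_snd measurable_fst)
  rw [hsplit, measure_union (disjoint_left.mpr fun z h₁ h₂ => h₂.2.not_ge h₁.2) hs,
    prod_self_setOf_fst_mem_and (· ≤ ·) (measurableSet_le measurable_fst measurable_snd) hA,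
    prod_self_setOf_snd_mem_and (· < ·) (measurableSet_lt measurable_fst measurable_snd) hA,
    two_mul]
  exact congrArg _ (lintegral_congr fun x => measure_congr Ioi_ae_eq_Ici)

theorem prod_self_setOf_max_mem (hA : MeasurableSet A) :
    (μ.prod μ) {z | max z.1 z.2 ∈ A} = 2 * ∫⁻ x in A, μ (Iic x) ∂μ := by
  have hsplit : {z : α × α | max z.1 z.2 ∈ A} =
      {z | z.1 ∈ A ∧ z.2 ≤ z.1} ∪ {z | z.2 ∈ A ∧ z.1 < z.2} := by
    ext ⟨x, y⟩
    rcases le_or_gt y x with h | h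
    · simp [h, not_lt.mpr h]
    · simp [h, h.le, not_le.mpr h]
  have hs : MeasurableSet {z : α × α | z.2 ∈ A ∧ z.1 < z.2} :=
    (measurable_snd hA).inter (measurableSet_lt measurable_fst measurable_snd)
  rw [hsplit, measure_union (disjoint_left.mpr fun z h₁ h₂ => h₂.2.not_ge h₁.2) hs,
    prod_self_setOf_fst_mem_and (fun x y => y ≤ x)
      (measurableSet_le measurable_snd measurable_fst) hA,
    prod_self_setOf_snd_mem_and (fun x y => y < x)
      (measurableSet_lt measurable_snd measurable_fst) hA,
    two_mul]
  exact congrArg _ (lintegral_congr fun x => measure_congr Iio_ae_eq_Iic)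

end LinearOrder

end MeasureTheory.Measure

theorem Pker_of_ne {p q : ℝ} {x y : UnitInt} (h : x ≠ y) :
    Pker p q x y = ENNReal.ofReal p • Measure.dirac (min x y) +
      ENNReal.ofReal q • Measure.dirac (max x y) := by
  rcases h.lt_or_gt with h | h
  · simp [Pker, h, h.le]
  · simp [Pker, h, h.le, h.not_gt]

theorem lintegral_lintegral_Pker_apply (p q : ℝ) {μ : Measure UnitInt} [SFinite μ]
    [NullSingletonClass μ] {A : Set UnitInt} (hA : MeasurableSet A) :
    ∫⁻ x, ∫⁻ y, Pker p q x y A ∂μ ∂μ =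
      ENNReal.ofReal p * (μ.prod μ) {z | min z.1 z.2 ∈ A} +
        ENNReal.ofReal q * (μ.prod μ) {z | max z.1 z.2 ∈ A} := by
  have hmin : MeasurableSet {z : UnitInt × UnitInt | min z.1 z.2 ∈ A} :=
    (measurable_fst.min measurable_snd) hA
  have hmax : MeasurableSet {z : UnitInt × UnitInt | max z.1 z.2 ∈ A} :=
    (measurable_fst.max measurable_snd) hA
  set f : UnitInt × UnitInt → ℝ≥0∞ := fun z =>
    ENNReal.ofReal p * {z | min z.1 z.2 ∈ A}.indicator 1 z +
      ENNReal.ofReal q * {z | max z.1 z.2 ∈ A}.indicator 1 z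
  have hf : Measurable f :=
    ((measurable_one.indicator hmin).const_mul _).add ((measurable_one.indicator hmax).const_mul _)
  have hae : ∀ x, (fun y => Pker p q x y A) =ᵐ[μ] fun y => f (x, y) := fun x => by
    filter_upwards [μ.ae_ne x] with y hy
    rw [Pker_of_ne hy.symm]
    simp [f, Measure.dirac_apply' _ hA, Set.indicator]
  calc ∫⁻ x, ∫⁻ y, Pker p q x y A ∂μ ∂μ = ∫⁻ x, ∫⁻ y, f (x, y) ∂μ ∂μ :=
        lintegral_congr fun x => lintegral_congr_ae (hae x)
    _ = ∫⁻ z, f z ∂μ.prod μ := (lintegral_prod f hf.aemeasurable).symm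
    _ = _ := by
      rw [lintegral_add_left ((measurable_one.indicator hmin).const_mul _),
        lintegral_const_mul _ (measurable_one.indicator hmin),
        lintegral_const_mul _ (measurable_one.indicator hmax),
        lintegral_indicator_one hmin, lintegral_indicator_one hmax]

theorem V_density_formula (p q : ℝ)
    (V : Measure UnitInt → Measure UnitInt)
    (hV : ∀ (μ : Measure UnitInt) (A : Set UnitInt), MeasurableSet A →
      V μ A = ∫⁻ x, ∫⁻ y, Pker p q x y A ∂μ ∂μ)
    (lam : Measure UnitInt) [IsProbabilityMeasure lam] [NullSingletonClass lam] :
    (∀ A : Set UnitInt, MeasurableSet A →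
      V lam A = ∫⁻ x in A,
        (ENNReal.ofReal (2*q) * lam (Set.Iic x) + ENNReal.ofReal (2*p) * lam (Set.Ici x)) ∂lam) ∧
    V lam = lam.withDensity
      (fun x => ENNReal.ofReal (2*q) * lam (Set.Iic x) + ENNReal.ofReal (2*p) * lam (Set.Ici x)) := by
  have hIic : Measurable fun x : UnitInt => lam (Iic x) :=
    Monotone.measurable fun _ _ h => measure_mono (Iic_subset_Iic.mpr h)
  have hIci : Measurable fun x : UnitInt => lam (Ici x) :=
    Antitone.measurable fun _ _ h => measure_mono (Ici_subset_Ici.mpr h)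
  have key : ∀ A : Set UnitInt, MeasurableSet A →
      V lam A = ∫⁻ x in A,
        (ENNReal.ofReal (2*q) * lam (Set.Iic x) + ENNReal.ofReal (2*p) * lam (Set.Ici x)) ∂lam := by
    intro A hA
    rw [hV lam A hA, lintegral_lintegral_Pker_apply p q hA, Measure.prod_self_setOf_min_mem hA,
      Measure.prod_self_setOf_max_mem hA, lintegral_add_left (hIic.const_mul _),
      lintegral_const_mul _ hIic, lintegral_const_mul _ hIci,
      ENNReal.ofReal_mul zero_le_two, ENNReal.ofReal_mul zero_le_two, ENNReal.ofReal_ofNat]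
    ring
  exact ⟨key, Measure.ext fun A hA => (key A hA).trans (withDensity_apply _ hA).symm⟩
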